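/- (Average of the tilt along a closed orbit.) Let γ ∈ (4/3, 2) and let (X(τ), Y(τ)) be a periodic solution of the planar tilt system with period P > 0 such that Y(τ) > 0 and 0 < X(τ)² + Y(τ) < 1 for all τ. Then the time average of X over one period equals the equilibrium value: (1/P)·∫₀^P X(τ) dτ = −√6(3γ−4)/(2(3−γ)). Consequently the average of T over one period equals 2(3γ−4)/(3−γ). -/

import Mathlib

/-!
Along the orbit both `Y` and `W = 1 - X² - Y` stay positive and return to their initial values
after one period, so the integrals of their logarithmic derivatives over a period vanish. Along the
flow, `(log Y)' = 2T + (4√6/3)X` and `(2 - γ)(log W)' = 2T + (2√6(γ-1)/3)X - 2(3γ-4)` are both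
affine in `T` and `X`, which gives two independent linear equations for `∫ T` and `∫ X`.
-/

noncomputable section

namespace CFTilt

/-- the function `T(X,Y)` on the Collinson-French background. -/
def Tpl (γ X Y : ℝ) : ℝ :=
  (((3*γ - 4) - (Real.sqrt 6/3)*(γ-1)*X) * (1 - X^2 - Y) + (2/3)*(2-γ)*X^2)
    / (1 - (γ-1)*(X^2 + Y))

/-- right-hand side of `X' = (T - 2/3)X - (2√6/3)Y`. -/
def FX (γ X Y : ℝ) : ℝ := (Tpl γ X Y - 2/3)*X - (2*Real.sqrt 6/3)*Y

/-- right-hand side of `Y' = 2(T + (2√6/3)X)Y`. -/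
def FY (γ X Y : ℝ) : ℝ := 2*(Tpl γ X Y + (2*Real.sqrt 6/3)*X)*Y

open Real Set MeasureTheory

theorem integral_linear_comb_eq_zero_of_hasDerivAt {F f g : ℝ → ℝ} {a b p q r : ℝ}
    (hF : ∀ t ∈ uIcc a b, HasDerivAt F (p * f t + q * g t + r) t) (hFab : F a = F b)
    (hf : IntervalIntegrable f volume a b) (hg : IntervalIntegrable g volume a b) :
    p * (∫ t in a..b, f t) + q * (∫ t in a..b, g t) + r * (b - a) = 0 := by
  have hfg : IntervalIntegrable (fun t => p * f t + q * g t) volume a b :=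
    (hf.const_mul p).add (hg.const_mul q)
  have h := intervalIntegral.integral_eq_sub_of_hasDerivAt hF (hfg.add intervalIntegrable_const)
  rw [hFab, sub_self, intervalIntegral.integral_add hfg intervalIntegrable_const,
    intervalIntegral.integral_add (hf.const_mul p) (hg.const_mul q),
    intervalIntegral.integral_const_mul, intervalIntegral.integral_const_mul,
    intervalIntegral.integral_const, smul_eq_mul] at h
  linarith

theorem one_sub_mul_pos_of_lt_two {γ s : ℝ} (hγ : γ < 2) (hs₀ : 0 ≤ s) (hs₁ : s < 1) :
    0 < 1 - (γ - 1) * s := by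
  nlinarith

theorem Tpl_mul_denom {γ x y : ℝ} (hD : 1 - (γ - 1) * (x ^ 2 + y) ≠ 0) :
    Tpl γ x y * (1 - (γ - 1) * (x ^ 2 + y))
      = ((3*γ - 4) - (√6/3)*(γ-1)*x) * (1 - x^2 - y) + (2/3)*(2-γ)*x^2 := by
  unfold Tpl
  field_simp

theorem FY_div_self (γ x : ℝ) {y : ℝ} (hy : y ≠ 0) :
    FY γ x y / y = 2 * Tpl γ x y + 4 * √6 / 3 * x := by
  unfold FY
  field_simp
  ring

theorem two_sub_mul_deriv_one_sub_sq_sub_div {γ x y : ℝ} (hW : 1 - x ^ 2 - y ≠ 0)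
    (hD : 1 - (γ - 1) * (x ^ 2 + y) ≠ 0) :
    (2 - γ) * ((-(2 * x * FX γ x y) - FY γ x y) / (1 - x ^ 2 - y))
      = 2 * Tpl γ x y + 2 * √6 * (γ - 1) / 3 * x - 2 * (3 * γ - 4) := by
  rw [← mul_div_assoc, div_eq_iff hW]
  unfold FX FY
  linear_combination (-2 : ℝ) * Tpl_mul_denom hD

theorem continuous_Tpl_comp {γ : ℝ} {X Y : ℝ → ℝ} (hX : Continuous X) (hY : Continuous Y)
    (hD : ∀ τ, 1 - (γ - 1) * (X τ ^ 2 + Y τ) ≠ 0) :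
    Continuous fun τ => Tpl γ (X τ) (Y τ) := by
  unfold Tpl
  exact Continuous.div (by fun_prop) (by fun_prop) hD

section Flow

variable {γ τ : ℝ} {X Y : ℝ → ℝ}

theorem hasDerivAt_log_Y (hY : HasDerivAt Y (FY γ (X τ) (Y τ)) τ) (hY₀ : Y τ ≠ 0) :
    HasDerivAt (fun t => log (Y t)) (2 * Tpl γ (X τ) (Y τ) + 4 * √6 / 3 * X τ) τ := by
  simpa only [FY_div_self _ _ hY₀] using hY.log hY₀

theorem hasDerivAt_two_sub_mul_log_one_sub_sq_sub
    (hX : HasDerivAt X (FX γ (X τ) (Y τ)) τ) (hY : HasDerivAt Y (FY γ (X τ) (Y τ)) τ)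
    (hW : 1 - X τ ^ 2 - Y τ ≠ 0) (hD : 1 - (γ - 1) * (X τ ^ 2 + Y τ) ≠ 0) :
    HasDerivAt (fun t => (2 - γ) * log (1 - X t ^ 2 - Y t))
      (2 * Tpl γ (X τ) (Y τ) + 2 * √6 * (γ - 1) / 3 * X τ - 2 * (3 * γ - 4)) τ := by
  have hW' : HasDerivAt (fun t => 1 - X t ^ 2 - Y t)
      (-(2 * X τ * FX γ (X τ) (Y τ)) - FY γ (X τ) (Y τ)) τ :=
    (((hasDerivAt_const τ 1).sub (hX.pow 2)).sub hY).congr_deriv (by push_cast; ring)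
  rw [← two_sub_mul_deriv_one_sub_sq_sub_div hW hD]
  exact (hW'.log hW).const_mul (2 - γ)

end Flow

theorem averages_of_linear_relations {γ P I J : ℝ} (hγ : γ ≠ 3) (hP : P ≠ 0)
    (hY : 2 * J + 4 * √6 / 3 * I = 0)
    (hW : 2 * J + 2 * √6 * (γ - 1) / 3 * I - 2 * (3 * γ - 4) * P = 0) :
    (1/P) * I = -√6*(3*γ-4)/(2*(3-γ)) ∧ (1/P) * J = 2*(3*γ-4)/(3-γ) := by
  have hs : √6 ^ 2 = 6 := sq_sqrt (by norm_num)
  have h3 : 3 - γ ≠ 0 := sub_ne_zero.2 (Ne.symm hγ)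
  have hI : 2 * (3 - γ) * I = -√6 * (3 * γ - 4) * P := by
    linear_combination (√6 / 2) * hY - (√6 / 2) * hW - ((3 - γ) * I / 3) * hs
  have hJ : (3 - γ) * J = 2 * (3 * γ - 4) * P := by
    linear_combination ((3 - γ) / 2) * hY - (√6 / 3) * hI + ((3 * γ - 4) * P / 3) * hs
  constructor
  · field_simp
    linear_combination hI
  · field_simp
    linear_combination hJ

theorem average_tilt_on_closed_orbit_general (γ : ℝ) (h2 : γ < 2)
    (X Y : ℝ → ℝ) (P : ℝ) (hP : 0 < P)
    (hX : ∀ τ : ℝ, HasDerivAt X (FX γ (X τ) (Y τ)) τ)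
    (hY : ∀ τ : ℝ, HasDerivAt Y (FY γ (X τ) (Y τ)) τ)
    (hper : ∀ τ : ℝ, X (τ + P) = X τ ∧ Y (τ + P) = Y τ)
    (hreg : ∀ τ : ℝ, 0 < Y τ ∧ 0 < (X τ)^2 + Y τ ∧ (X τ)^2 + Y τ < 1) :
    (1/P) * (∫ τ in (0:ℝ)..P, X τ) = -Real.sqrt 6*(3*γ-4)/(2*(3-γ)) ∧
    (1/P) * (∫ τ in (0:ℝ)..P, Tpl γ (X τ) (Y τ)) = 2*(3*γ-4)/(3-γ) := by
  have hY₀ τ : Y τ ≠ 0 := (hreg τ).1.ne'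
  have hW τ : 1 - X τ ^ 2 - Y τ ≠ 0 := by linarith [(hreg τ).2.2]
  have hD τ : 1 - (γ - 1) * (X τ ^ 2 + Y τ) ≠ 0 :=
    (one_sub_mul_pos_of_lt_two h2 (hreg τ).2.1.le (hreg τ).2.2).ne'
  have hXc : Continuous X := Differentiable.continuous fun τ => (hX τ).differentiableAt
  have hYc : Continuous Y := Differentiable.continuous fun τ => (hY τ).differentiableAt
  have hTc := continuous_Tpl_comp hXc hYc hD
  obtain ⟨hXP, hYP⟩ := hper 0
  rw [zero_add] at hXP hYP
  have eY := integral_linear_comb_eq_zero_of_hasDerivAt (r := 0)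
    (fun τ _ => (hasDerivAt_log_Y (hY τ) (hY₀ τ)).congr_deriv (add_zero _).symm)
    (by rw [hYP]) (hTc.intervalIntegrable 0 P) (hXc.intervalIntegrable 0 P)
  have eW := integral_linear_comb_eq_zero_of_hasDerivAt
    (fun τ _ => (hasDerivAt_two_sub_mul_log_one_sub_sq_sub (hX τ) (hY τ) (hW τ) (hD τ)).congr_deriv
      (sub_eq_add_neg _ _))
    (by rw [hXP, hYP]) (hTc.intervalIntegrable 0 P) (hXc.intervalIntegrable 0 P)
  exact averages_of_linear_relations (by linarith) hP.ne' (by linarith) (by linarith)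

theorem average_tilt_on_closed_orbit (γ : ℝ) (h1 : 4/3 < γ) (h2 : γ < 2)
    (X Y : ℝ → ℝ) (P : ℝ) (hP : 0 < P)
    (hX : ∀ τ : ℝ, HasDerivAt X (FX γ (X τ) (Y τ)) τ)
    (hY : ∀ τ : ℝ, HasDerivAt Y (FY γ (X τ) (Y τ)) τ)
    (hper : ∀ τ : ℝ, X (τ + P) = X τ ∧ Y (τ + P) = Y τ)
    (hreg : ∀ τ : ℝ, 0 < Y τ ∧ 0 < (X τ)^2 + Y τ ∧ (X τ)^2 + Y τ < 1) :
    (1/P) * (∫ τ in (0:ℝ)..P, X τ) = -Real.sqrt 6*(3*γ-4)/(2*(3-γ)) ∧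
    (1/P) * (∫ τ in (0:ℝ)..P, Tpl γ (X τ) (Y τ)) = 2*(3*γ-4)/(3-γ) :=
  average_tilt_on_closed_orbit_general γ h2 X Y P hP hX hY hper hreg

end CFTilt
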